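/- Let ω = δ_0 (point mass at 0) and σ = ∑_{n=2}^∞ n δ_n on ℝ. Then the pivotal condition V(ω,σ)² is finite: for every interval I_0 and every decomposition I_0 = ∪_r I_r into disjoint intervals, ∑_r ω(I_r) P(I_r, 1_{I_0}σ)² ≤ C σ(I_0); but the one-tailed A_2 condition fails, since with I = [0,1], (ω(I)/|I|) P(I,σ) = ∑_{n≥2} n/n² = ∞. -/

import Mathlib

/-! Since `ω = δ₀`, only the one piece `I_r` containing `0` counts in the pivotal sum, which is then
`P(I_r, 1_{I₀}σ)²`. As `0 ∈ I_r`, the Poisson kernel of `I_r` is at most `1 / n` at an atom `n ≥ 2`,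
so every atom of `σ` in `I₀` contributes at most `1` to that Poisson integral; and as `0 ∈ I₀`, these
atoms are `2, …, N + 1`, whence `P² ≤ N² ≤ 2 (2 + ⋯ + (N + 1)) = 2 σ(I₀)`. On the other hand, for
any interval `I` the atom `n` contributes about `|I| / n` to `P(I, σ)`, which therefore diverges
like the harmonic series. -/

open MeasureTheory ENNReal

/-- An interval in `ℝ` given by its center and (positive) half-length. -/
structure RInterval where
  c : ℝ
  r : ℝ
  hr : 0 < r

namespace RInterval

def set (I : RInterval) : Set ℝ := Set.Ico (I.c - I.r) (I.c + I.r)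

noncomputable def len (I : RInterval) : ℝ := 2 * I.r

end RInterval

/-- The one-dimensional Poisson integral `P(I,ω) = ∫ |I|/(|I|+dist(x,I))² dω(x)`. -/
noncomputable def poisson (I : RInterval) (ω : Measure ℝ) : ℝ≥0∞ :=
  ∫⁻ x, ENNReal.ofReal (I.len / (I.len + Metric.infDist x I.set) ^ 2) ∂ω


/-- `ω = δ_0`, the unit point mass at the origin. -/
noncomputable def omegaMeas : Measure ℝ := Measure.dirac 0

/-- `σ = ∑_{n≥2} n δ_n`. -/
noncomputable def sigmaMeas : Measure ℝ :=
  Measure.sum (fun k : ℕ => (((k : ℝ≥0∞) + 2)) • Measure.dirac ((k : ℝ) + 2))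

/-- The unit interval `[0,1)` as an `RInterval`. -/
noncomputable def unitInterval' : RInterval := ⟨1/2, 1/2, by norm_num⟩

namespace RInterval

lemma center_mem (I : RInterval) : I.c ∈ I.set :=
  ⟨by linarith [I.hr], by linarith [I.hr]⟩

lemma measurableSet (I : RInterval) : MeasurableSet I.set :=
  measurableSet_Ico

lemma len_pos (I : RInterval) : 0 < I.len := by
  rw [len]; linarith [I.hr]

lemma sub_len_le_infDist {I : RInterval} (hI : (0 : ℝ) ∈ I.set) (x : ℝ) :
    x - I.len ≤ Metric.infDist x I.set := by
  refine (Metric.le_infDist ⟨0, hI⟩).2 fun y hy => ?_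
  obtain ⟨h0, -⟩ := hI
  obtain ⟨-, hy⟩ := hy
  rw [Real.dist_eq, len]
  linarith [le_abs_self (x - y)]

lemma mul_poissonKernel_le_one {I : RInterval} (hI : (0 : ℝ) ∈ I.set) (x : ℝ) :
    x * (I.len / (I.len + Metric.infDist x I.set) ^ 2) ≤ 1 := by
  have hL := I.len_pos
  have hd := sub_len_le_infDist hI x
  have hd0 : 0 ≤ Metric.infDist x I.set := Metric.infDist_nonneg
  rw [mul_div_assoc', div_le_one (by positivity), sq]
  exact mul_le_mul (by linarith) (by linarith) hL.le (by positivity)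

noncomputable def sigmaAtomCount (I : RInterval) : ℕ := ⌈I.c + I.r - 2⌉₊

lemma natCast_add_two_mem_set_iff {I : RInterval} (hI : (0 : ℝ) ∈ I.set) (k : ℕ) :
    (k : ℝ) + 2 ∈ I.set ↔ k < I.sigmaAtomCount := by
  obtain ⟨h0, -⟩ := hI
  rw [sigmaAtomCount, Nat.lt_ceil, set, Set.mem_Ico]
  constructor
  · rintro ⟨-, h⟩
    linarith
  · intro h
    exact ⟨by linarith [k.cast_nonneg (α := ℝ)], by linarith⟩

end RInterval

open RInterval

lemma natCast_add_two_eq_ofReal (k : ℕ) : (k : ℝ≥0∞) + 2 = ENNReal.ofReal ((k : ℝ) + 2) := by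
  rw [ENNReal.ofReal_add k.cast_nonneg zero_le_two, ENNReal.ofReal_natCast, ENNReal.ofReal_ofNat]

lemma lintegral_sigmaMeas (f : ℝ → ℝ≥0∞) :
    ∫⁻ x, f x ∂sigmaMeas = ∑' k : ℕ, ((k : ℝ≥0∞) + 2) * f ((k : ℝ) + 2) := by
  simp only [sigmaMeas, lintegral_sum_measure, lintegral_smul_measure, lintegral_dirac,
    smul_eq_mul]

lemma setLIntegral_sigmaMeas_of_zero_mem {I : RInterval} (hI : (0 : ℝ) ∈ I.set)
    (f : ℝ → ℝ≥0∞) :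
    ∫⁻ x in I.set, f x ∂sigmaMeas =
      ∑ k ∈ Finset.range I.sigmaAtomCount, ((k : ℝ≥0∞) + 2) * f ((k : ℝ) + 2) := by
  rw [← lintegral_indicator I.measurableSet, lintegral_sigmaMeas, tsum_eq_sum fun k hk => ?_]
  · refine Finset.sum_congr rfl fun k hk => ?_
    rw [Set.indicator_of_mem ((natCast_add_two_mem_set_iff hI k).2 (Finset.mem_range.1 hk))]
  · rw [Set.indicator_of_notMem ((natCast_add_two_mem_set_iff hI k).not.2
      (Finset.mem_range.not.1 hk)), mul_zero]

lemma sigmaMeas_of_zero_mem {I : RInterval} (hI : (0 : ℝ) ∈ I.set) :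
    sigmaMeas I.set = ∑ k ∈ Finset.range I.sigmaAtomCount, ((k : ℝ≥0∞) + 2) := by
  simp only [← setLIntegral_one, setLIntegral_sigmaMeas_of_zero_mem hI, mul_one]

lemma poisson_sigmaMeas_restrict_le {I I₀ : RInterval} (hI : (0 : ℝ) ∈ I.set)
    (h₀ : (0 : ℝ) ∈ I₀.set) :
    poisson I (sigmaMeas.restrict I₀.set) ≤ I₀.sigmaAtomCount := by
  rw [poisson, setLIntegral_sigmaMeas_of_zero_mem h₀]
  calc _ ≤ ∑ _k ∈ Finset.range I₀.sigmaAtomCount, (1 : ℝ≥0∞) := Finset.sum_le_sum fun k _ => ?_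
    _ = I₀.sigmaAtomCount := by simp
  rw [natCast_add_two_eq_ofReal, ← ENNReal.ofReal_mul (by positivity)]
  exact ENNReal.ofReal_le_one.2 (mul_poissonKernel_le_one hI _)

lemma sq_le_two_mul_sum_range_add_two (N : ℕ) : N ^ 2 ≤ 2 * ∑ k ∈ Finset.range N, (k + 2) := by
  induction N with
  | zero => simp
  | succ n ih =>
    rw [Finset.sum_range_succ]
    nlinarith

lemma poisson_sigmaMeas_restrict_sq_le {I I₀ : RInterval} (hI : (0 : ℝ) ∈ I.set)
    (h₀ : (0 : ℝ) ∈ I₀.set) :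
    poisson I (sigmaMeas.restrict I₀.set) ^ 2 ≤ 2 * sigmaMeas I₀.set := by
  rw [sigmaMeas_of_zero_mem h₀]
  calc _ ≤ (I₀.sigmaAtomCount : ℝ≥0∞) ^ 2 := by
        gcongr
        exact poisson_sigmaMeas_restrict_le hI h₀
    _ ≤ _ := by exact_mod_cast sq_le_two_mul_sum_range_add_two _

lemma tsum_dirac_mul_le_of_pairwise_disjoint {α ι : Type*} [MeasurableSpace α] {a : α}
    {s : ι → Set α} (hs : ∀ i, MeasurableSet (s i)) (hd : Pairwise fun i j => Disjoint (s i) (s j))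
    {f : ι → ℝ≥0∞} {B : ℝ≥0∞} (hB : ∀ i, a ∈ s i → f i ≤ B) :
    ∑' i, Measure.dirac a (s i) * f i ≤ B := by
  by_cases h : ∃ i, a ∈ s i
  · obtain ⟨i, hi⟩ := h
    rw [tsum_eq_single i fun j hj => ?_]
    · rw [Measure.dirac_apply' a (hs i), Set.indicator_of_mem hi, Pi.one_apply, one_mul]
      exact hB i hi
    · rw [Measure.dirac_apply' a (hs j),
        Set.indicator_of_notMem (Set.disjoint_left.1 (hd hj.symm) hi), zero_mul]
  · simp [Measure.dirac_apply' a (hs _), not_exists.1 h]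

lemma tsum_ofReal_div_natCast_add_two_eq_top {a : ℝ} (ha : 0 < a) :
    ∑' k : ℕ, ENNReal.ofReal (a / ((k : ℝ) + 2)) = ∞ := by
  by_contra h
  have hsum : Summable fun k : ℕ => a / ((k : ℝ) + 2) :=
    (ENNReal.summable_toReal h).congr fun k => ENNReal.toReal_ofReal (by positivity)
  refine Real.not_summable_one_div_natCast ((summable_nat_add_iff 2).1 ?_)
  refine (hsum.mul_left a⁻¹).congr fun k => ?_
  push_cast
  field_simp

lemma poisson_sigmaMeas_eq_top (I : RInterval) : poisson I sigmaMeas = ∞ := by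
  have hL := I.len_pos
  set B := 1 + I.len + |I.c|
  rw [poisson, lintegral_sigmaMeas, eq_top_iff,
    ← tsum_ofReal_div_natCast_add_two_eq_top (a := I.len / B ^ 2) (by positivity)]
  refine ENNReal.tsum_le_tsum fun k => ?_
  set x : ℝ := (k : ℝ) + 2
  have hx : 1 ≤ x := by linarith [k.cast_nonneg (α := ℝ)]
  have hd0 : 0 ≤ Metric.infDist x I.set := Metric.infDist_nonneg
  have hd : Metric.infDist x I.set ≤ x + |I.c| := by
    refine (Metric.infDist_le_dist_of_mem I.center_mem).trans ?_
    rw [Real.dist_eq]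
    exact (abs_sub _ _).trans (by rw [abs_of_pos (by linarith)])
  have hLd : I.len + Metric.infDist x I.set ≤ x * B := by
    nlinarith [abs_nonneg I.c]
  rw [natCast_add_two_eq_ofReal, ← ENNReal.ofReal_mul (by positivity)]
  refine ENNReal.ofReal_le_ofReal ?_
  calc I.len / B ^ 2 / x = x * (I.len / (x * B) ^ 2) := by field_simp
    _ ≤ x * (I.len / (I.len + Metric.infDist x I.set) ^ 2) := by gcongr

/-- For `ω = δ_0` and `σ = ∑_{n≥2} n δ_n`, the pivotal condition `V(ω,σ)²`
holds, but the one-tailed `A_2` condition fails at `I = [0,1]`. -/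
theorem stmt_8 :
    (∃ C > (0:ℝ), ∀ I₀ : RInterval, ∀ Ir : ℕ → RInterval,
      (Pairwise fun r s => Disjoint (Ir r).set (Ir s).set) →
      (⋃ r, (Ir r).set) = I₀.set →
      ∑' r, omegaMeas (Ir r).set * (poisson (Ir r) (sigmaMeas.restrict I₀.set)) ^ 2 ≤
        ENNReal.ofReal C * sigmaMeas I₀.set) ∧
    (omegaMeas unitInterval'.set / ENNReal.ofReal unitInterval'.len) *
      poisson unitInterval' sigmaMeas = ⊤ := by
  refine ⟨⟨2, two_pos, fun I₀ Ir hdisj hunion => ?_⟩, ?_⟩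
  · rw [ENNReal.ofReal_ofNat]
    refine tsum_dirac_mul_le_of_pairwise_disjoint (fun r => (Ir r).measurableSet) hdisj
      fun r hr => poisson_sigmaMeas_restrict_sq_le hr ?_
    exact hunion ▸ Set.mem_iUnion.2 ⟨r, hr⟩
  · have h0 : (0 : ℝ) ∈ unitInterval'.set := by norm_num [unitInterval', RInterval.set]
    have hlen : unitInterval'.len = 1 := by norm_num [unitInterval', RInterval.len]
    rw [poisson_sigmaMeas_eq_top, omegaMeas, Measure.dirac_apply_of_mem h0, hlen]
    simp
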